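/- Let A ∈ 𝒜 satisfy condition (♦) and suppose the first column of A satisfies ∑_{n=1}^∞ φ_n(|a_{n1}|/σ) < ∞ for some σ > 0. Then the class L_Φ^A is a quasi-Banach operator ideal: for all Banach spaces E, F, E_0, F_0: (i) for every continuous linear functional x' on E and every y ∈ F, the rank-one operator x'⊗y : x ↦ x'(x)y belongs to L_Φ^A(E,F); (ii) if S, T ∈ L_Φ^A(E,F) then S+T ∈ L_Φ^A(E,F); (iii) if T ∈ L(E_0,E), S ∈ L_Φ^A(E,F) and R ∈ L(F,F_0), then RST ∈ L_Φ^A(E_0,F_0) and ‖RST‖_Φ^A ≤ ‖R‖ ‖S‖_Φ^A ‖T‖; and each component L_Φ^A(E,F) is complete under the quasi-norm ‖·‖_Φ^A. -/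

import Mathlib

open Filter Topology

/-- An Orlicz function: convex, nondecreasing, continuous on `[0,∞)`,
vanishing at `0`, positive on `(0,∞)`, tending to `∞` at `∞`. -/
structure IsOrliczFn (φ : ℝ → ℝ) : Prop where
  convexOn : ConvexOn ℝ (Set.Ici (0 : ℝ)) φ
  monotoneOn : MonotoneOn φ (Set.Ici (0 : ℝ))
  continuousOn : ContinuousOn φ (Set.Ici (0 : ℝ))
  map_zero : φ 0 = 0
  pos : ∀ t : ℝ, 0 < t → 0 < φ t
  tendsto_atTop : Filter.Tendsto φ Filter.atTop Filter.atTop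

/-- A Musielak-Orlicz function: a sequence of Orlicz functions. -/
def IsMusielakOrlicz (Φ : ℕ → ℝ → ℝ) : Prop := ∀ n, IsOrliczFn (Φ n)

/-- The class 𝒜 of infinite matrices: every column is nonzero. -/
def MatrixClassA (a : ℕ → ℕ → ℝ) : Prop := ∀ k, ∃ n, a n k ≠ 0

/-- Condition (♦) on the matrix `A` with constant `M` (`0`-indexed version of
`|a_{n,2k-1}| + |a_{n,2k}| ≤ M |a_{n,k}|`). -/
def CondDiamond (a : ℕ → ℕ → ℝ) (M : ℝ) : Prop :=
  ∀ n k : ℕ, |a n (2 * k)| + |a n (2 * k + 1)| ≤ M * |a n k|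

/-- An `s`-number sequence in the sense of Pietsch (indexed from `0`, so that
`s T 0` is the paper's `s₁(T)`). -/
structure SNumberSeq : Type 1 where
  s : ∀ (E F : Type) [NormedAddCommGroup E] [NormedSpace ℝ E] [CompleteSpace E]
      [NormedAddCommGroup F] [NormedSpace ℝ F] [CompleteSpace F],
      (E →L[ℝ] F) → ℕ → ℝ
  nonneg : ∀ (E F : Type) [NormedAddCommGroup E] [NormedSpace ℝ E] [CompleteSpace E]
      [NormedAddCommGroup F] [NormedSpace ℝ F] [CompleteSpace F]
      (T : E →L[ℝ] F) (n : ℕ), 0 ≤ s E F T n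
  norm_eq : ∀ (E F : Type) [NormedAddCommGroup E] [NormedSpace ℝ E] [CompleteSpace E]
      [NormedAddCommGroup F] [NormedSpace ℝ F] [CompleteSpace F]
      (T : E →L[ℝ] F), s E F T 0 = ‖T‖
  antitone : ∀ (E F : Type) [NormedAddCommGroup E] [NormedSpace ℝ E] [CompleteSpace E]
      [NormedAddCommGroup F] [NormedSpace ℝ F] [CompleteSpace F]
      (T : E →L[ℝ] F), Antitone (s E F T)
  additive : ∀ (E F : Type) [NormedAddCommGroup E] [NormedSpace ℝ E] [CompleteSpace E]
      [NormedAddCommGroup F] [NormedSpace ℝ F] [CompleteSpace F]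
      (S T : E →L[ℝ] F) (m n : ℕ), s E F (S + T) (m + n) ≤ s E F S m + s E F T n
  ideal : ∀ (E F E₀ F₀ : Type)
      [NormedAddCommGroup E] [NormedSpace ℝ E] [CompleteSpace E]
      [NormedAddCommGroup F] [NormedSpace ℝ F] [CompleteSpace F]
      [NormedAddCommGroup E₀] [NormedSpace ℝ E₀] [CompleteSpace E₀]
      [NormedAddCommGroup F₀] [NormedSpace ℝ F₀] [CompleteSpace F₀]
      (R : F →L[ℝ] F₀) (S : E →L[ℝ] F) (T : E₀ →L[ℝ] E) (n : ℕ),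
      s E₀ F₀ ((R.comp S).comp T) n ≤ ‖R‖ * s E F S n * ‖T‖
  rank : ∀ (E F : Type) [NormedAddCommGroup E] [NormedSpace ℝ E] [CompleteSpace E]
      [NormedAddCommGroup F] [NormedSpace ℝ F] [CompleteSpace F]
      (T : E →L[ℝ] F) (n : ℕ),
      Module.rank ℝ ↥(LinearMap.range (T : E →ₗ[ℝ] F)) ≤ (n : Cardinal) → s E F T n = 0
  norming : ∀ n : ℕ,
      s (EuclideanSpace ℝ (Fin (n + 1))) (EuclideanSpace ℝ (Fin (n + 1)))
        (ContinuousLinearMap.id ℝ (EuclideanSpace ℝ (Fin (n + 1)))) n = 1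

/-- Membership of a scalar sequence `t = (s_k(T))` in `l_Φ^A`:
row sums `∑_k |a_{nk}| t_k` are finite and `∑_n φ_n(row_n/σ) < ∞` for some `σ > 0`. -/
def OpMemL (Φ : ℕ → ℝ → ℝ) (a : ℕ → ℕ → ℝ) (t : ℕ → ℝ) : Prop :=
  (∀ n, Summable fun k => |a n k| * t k) ∧
    ∃ σ > (0 : ℝ), Summable fun n => Φ n ((∑' k, |a n k| * t k) / σ)

/-- Membership in `h_Φ^A`: as `OpMemL` but for every `σ > 0`. -/
def OpMemH (Φ : ℕ → ℝ → ℝ) (a : ℕ → ℕ → ℝ) (t : ℕ → ℝ) : Prop :=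
  (∀ n, Summable fun k => |a n k| * t k) ∧
    ∀ σ > (0 : ℝ), Summable fun n => Φ n ((∑' k, |a n k| * t k) / σ)

/-- The quasi-norm `‖T‖_Φ^A` evaluated on the sequence `t = (s_k(T))`. -/
noncomputable def OpANorm (Φ : ℕ → ℝ → ℝ) (a : ℕ → ℕ → ℝ) (t : ℕ → ℝ) : ℝ :=
  sInf {σ : ℝ | 0 < σ ∧ (Summable fun n => Φ n ((∑' k, |a n k| * t k) / σ)) ∧
    (∑' n, Φ n ((∑' k, |a n k| * t k) / σ)) ≤ 1}

/-!
Everything happens in the sequence space `l_Φ^A`, applied to `k ↦ s_k(T)`.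

A rank-one operator has `s_k = 0` for `k ≥ 1`, so its row sums are a multiple of the first
column of `A`. For a sum, `s_{j+k}(S + T) ≤ s_j(S) + s_k(T)` bounds `s_{2k}` and `s_{2k+1}` of
`S + T` by `s_k(S) + s_k(T)`, and condition (♦) turns this into a bound of the row sums of
`S + T` by `M` times those of `S` and `T`; convexity of the `φ_n` finishes the argument. The
ideal inequality is the monotonicity of the Luxemburg quasi-norm under
`s_k(RST) ≤ ‖R‖ ‖T‖ s_k(S)`.

For completeness, a nonzero entry `a_{n0}` of the first column gives
`|a_{n0}| ‖X‖ ≤ c ‖X‖_Φ^A`, so a Cauchy sequence converges in operator norm. The `s`-numbers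
are `1`-Lipschitz for the operator norm, and the modular condition passes to pointwise limits
because it is a supremum over finite truncations of the double series (Fatou).
-/

namespace IsOrliczFn

variable {φ : ℝ → ℝ}

lemma mono (h : IsOrliczFn φ) {x y : ℝ} (hx : 0 ≤ x) (hxy : x ≤ y) : φ x ≤ φ y :=
  h.monotoneOn hx (hx.trans hxy) hxy

lemma nonneg (h : IsOrliczFn φ) {x : ℝ} (hx : 0 ≤ x) : 0 ≤ φ x :=
  h.map_zero ▸ h.mono le_rfl hx

lemma map_mul_le (h : IsOrliczFn φ) {θ x : ℝ} (hθ₀ : 0 ≤ θ) (hθ₁ : θ ≤ 1) (hx : 0 ≤ x) :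
    φ (θ * x) ≤ θ * φ x := by
  simpa [h.map_zero] using h.convexOn.2 (Set.mem_Ici.2 hx) (Set.mem_Ici.2 le_rfl) hθ₀
    (sub_nonneg.2 hθ₁) (add_sub_cancel θ 1)

lemma map_add_div_le (h : IsOrliczFn φ) {x y σ τ : ℝ} (hx : 0 ≤ x) (hy : 0 ≤ y)
    (hσ : 0 < σ) (hτ : 0 < τ) :
    φ ((x + y) / (σ + τ)) ≤ σ / (σ + τ) * φ (x / σ) + τ / (σ + τ) * φ (y / τ) := by
  have hcomb : σ / (σ + τ) * (x / σ) + τ / (σ + τ) * (y / τ) = (x + y) / (σ + τ) := by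
    field_simp
  have := h.convexOn.2 (Set.mem_Ici.2 (div_nonneg hx hσ.le))
    (Set.mem_Ici.2 (div_nonneg hy hτ.le)) (by positivity) (by positivity)
    (by field_simp : σ / (σ + τ) + τ / (σ + τ) = 1)
  simpa only [smul_eq_mul, hcomb] using this

lemma exists_le_of_map_le_one (h : IsOrliczFn φ) :
    ∃ c > 0, ∀ x, 0 ≤ x → φ x ≤ 1 → x ≤ c := by
  obtain ⟨c, hc, hc₁⟩ :=
    ((h.tendsto_atTop.eventually_gt_atTop 1).and (eventually_ge_atTop 1)).exists
  refine ⟨c, one_pos.trans_le hc₁, fun x hx hφx => ?_⟩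
  by_contra! hcx
  exact (hc.trans_le (h.mono (zero_le_one.trans hc₁) hcx.le)).not_ge hφx

lemma tendsto_comp (h : IsOrliczFn φ) {ι : Type*} {l : Filter ι} {g : ι → ℝ} {x : ℝ}
    (hg : ∀ i, 0 ≤ g i) (hx : 0 ≤ x) (hgx : Tendsto g l (𝓝 x)) :
    Tendsto (fun i => φ (g i)) l (𝓝 (φ x)) :=
  (h.continuousOn x hx).tendsto.comp (tendsto_nhdsWithin_iff.2 ⟨hgx, .of_forall hg⟩)

end IsOrliczFn

lemma summable_of_even_add_odd_le {f g : ℕ → ℝ} (hf : 0 ≤ f) (hg : Summable g)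
    (hfg : ∀ k, f (2 * k) + f (2 * k + 1) ≤ g k) : Summable f :=
  .even_add_odd
    (hg.of_nonneg_of_le (fun _ => hf _) fun k => (le_add_of_nonneg_right (hf _)).trans (hfg k))
    (hg.of_nonneg_of_le (fun _ => hf _) fun k => (le_add_of_nonneg_left (hf _)).trans (hfg k))

lemma tsum_le_of_even_add_odd_le {f g : ℕ → ℝ} (hf : 0 ≤ f) (hg : Summable g)
    (hfg : ∀ k, f (2 * k) + f (2 * k + 1) ≤ g k) : ∑' k, f k ≤ ∑' k, g k := by
  have hfs := summable_of_even_add_odd_le hf hg hfg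
  have he : Summable fun k => f (2 * k) := hfs.comp_injective (mul_right_injective₀ two_ne_zero)
  have ho : Summable fun k => f (2 * k + 1) :=
    hfs.comp_injective ((add_left_injective 1).comp (mul_right_injective₀ two_ne_zero))
  rw [← tsum_even_add_odd he ho, ← he.tsum_add ho]
  exact (he.add ho).tsum_le_tsum hfg hg

section SequenceSpace

variable {Φ : ℕ → ℝ → ℝ} {a : ℕ → ℕ → ℝ} {t u v : ℕ → ℝ} {c σ M : ℝ}

noncomputable def rowSum (a : ℕ → ℕ → ℝ) (t : ℕ → ℝ) (n : ℕ) : ℝ := ∑' k, |a n k| * t k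

def RowsSummable (a : ℕ → ℕ → ℝ) (t : ℕ → ℝ) : Prop := ∀ n, Summable fun k => |a n k| * t k

/-- The set whose infimum is `OpANorm Φ a t`. -/
def luxemburgSet (Φ : ℕ → ℝ → ℝ) (a : ℕ → ℕ → ℝ) (t : ℕ → ℝ) : Set ℝ :=
  {σ | 0 < σ ∧ (Summable fun n => Φ n (rowSum a t n / σ)) ∧ ∑' n, Φ n (rowSum a t n / σ) ≤ 1}

lemma rowSum_nonneg (ht : 0 ≤ t) (n : ℕ) : 0 ≤ rowSum a t n :=
  tsum_nonneg fun k => mul_nonneg (abs_nonneg _) (ht k)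

lemma map_rowSum_div_nonneg (hΦ : IsMusielakOrlicz Φ) (ht : 0 ≤ t) (hσ : 0 ≤ σ) (n : ℕ) :
    0 ≤ Φ n (rowSum a t n / σ) :=
  (hΦ n).nonneg (div_nonneg (rowSum_nonneg ht n) hσ)

lemma abs_mul_le_of_le (htu : t ≤ c • u) (n k : ℕ) : |a n k| * t k ≤ c * (|a n k| * u k) := by
  rw [mul_left_comm]
  exact mul_le_mul_of_nonneg_left (htu k) (abs_nonneg _)

lemma RowsSummable.of_le (hu : RowsSummable a u) (ht : 0 ≤ t) (htu : t ≤ c • u) :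
    RowsSummable a t := fun n =>
  ((hu n).mul_left c).of_nonneg_of_le (fun k => mul_nonneg (abs_nonneg _) (ht k))
    (abs_mul_le_of_le htu n)

lemma rowSum_le_of_le (hu : RowsSummable a u) (ht : 0 ≤ t) (htu : t ≤ c • u) (n : ℕ) :
    rowSum a t n ≤ c * rowSum a u n := by
  rw [rowSum, rowSum, ← tsum_mul_left]
  exact (hu.of_le ht htu n).tsum_le_tsum (abs_mul_le_of_le htu n) ((hu n).mul_left c)

lemma map_rowSum_div_le (hΦ : IsMusielakOrlicz Φ) (hu : RowsSummable a u) (ht : 0 ≤ t)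
    (htu : t ≤ c • u) (hc : 0 < c) (hσ : 0 < σ) (n : ℕ) :
    Φ n (rowSum a t n / (c * σ)) ≤ Φ n (rowSum a u n / σ) := by
  refine (hΦ n).mono (div_nonneg (rowSum_nonneg ht n) (by positivity)) ?_
  rw [← mul_div_mul_left (rowSum a u n) σ hc.ne']
  exact div_le_div_of_nonneg_right (rowSum_le_of_le hu ht htu n) (by positivity)

lemma opMemL_of_le (hΦ : IsMusielakOrlicz Φ) (hu : OpMemL Φ a u) (ht : 0 ≤ t) (hu₀ : 0 ≤ u)
    (htu : t ≤ c • u) : OpMemL Φ a t := by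
  obtain ⟨hrows, σ, hσ, hsum⟩ := hu
  have hc : 0 < max c 1 := lt_max_of_lt_right one_pos
  have htu' : t ≤ max c 1 • u := htu.trans (smul_le_smul_of_nonneg_right (le_max_left _ _) hu₀)
  exact ⟨RowsSummable.of_le hrows ht htu', max c 1 * σ, by positivity, hsum.of_nonneg_of_le
    (map_rowSum_div_nonneg hΦ ht (by positivity)) (map_rowSum_div_le hΦ hrows ht htu' hc hσ)⟩

lemma mem_luxemburgSet_of_le (hΦ : IsMusielakOrlicz Φ) (hu : RowsSummable a u) (ht : 0 ≤ t)
    (htu : t ≤ c • u) (hc : 0 < c) (hσ : σ ∈ luxemburgSet Φ a u) :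
    c * σ ∈ luxemburgSet Φ a t := by
  obtain ⟨hσ₀, hsum, hle⟩ := hσ
  have hmap := map_rowSum_div_le hΦ hu ht htu hc hσ₀
  have hsum' : Summable fun n => Φ n (rowSum a t n / (c * σ)) :=
    hsum.of_nonneg_of_le (map_rowSum_div_nonneg hΦ ht (by positivity)) hmap
  exact ⟨by positivity, hsum', (hsum'.tsum_le_tsum hmap hsum).trans hle⟩

lemma luxemburgSet_nonempty (hΦ : IsMusielakOrlicz Φ) (ht : 0 ≤ t) (h : OpMemL Φ a t) :
    (luxemburgSet Φ a t).Nonempty := by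
  obtain ⟨-, σ, hσ, hsum⟩ := h
  set C := max 1 (∑' n, Φ n (rowSum a t n / σ))
  have hC : 0 < C := lt_max_of_lt_left one_pos
  have hmap : ∀ n, Φ n (rowSum a t n / (C * σ)) ≤ C⁻¹ * Φ n (rowSum a t n / σ) := fun n => by
    rw [mul_comm C, ← div_div, div_eq_inv_mul _ C]
    exact (hΦ n).map_mul_le (by positivity) (inv_le_one_of_one_le₀ (le_max_left _ _))
      (div_nonneg (rowSum_nonneg ht n) hσ.le)
  have hsum' : Summable fun n => Φ n (rowSum a t n / (C * σ)) :=
    (hsum.mul_left _).of_nonneg_of_le (map_rowSum_div_nonneg hΦ ht (by positivity)) hmap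
  refine ⟨C * σ, by positivity, hsum', ?_⟩
  calc ∑' n, Φ n (rowSum a t n / (C * σ)) ≤ C⁻¹ * ∑' n, Φ n (rowSum a t n / σ) := by
        rw [← tsum_mul_left]; exact hsum'.tsum_le_tsum hmap (hsum.mul_left _)
    _ ≤ 1 := inv_mul_le_one_of_le₀ (le_max_right _ _) hC.le

lemma opANorm_nonneg : 0 ≤ OpANorm Φ a t :=
  Real.sInf_nonneg fun _ h => h.1.le

lemma opANorm_le_of_mem (h : σ ∈ luxemburgSet Φ a t) : OpANorm Φ a t ≤ σ :=
  csInf_le ⟨0, fun _ h => h.1.le⟩ h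

lemma opANorm_le_mul_of_pos (hΦ : IsMusielakOrlicz Φ) (hu : OpMemL Φ a u) (ht : 0 ≤ t)
    (hu₀ : 0 ≤ u) (htu : t ≤ c • u) (hc : 0 < c) : OpANorm Φ a t ≤ c * OpANorm Φ a u := by
  rw [← div_le_iff₀' hc]
  exact le_csInf (luxemburgSet_nonempty hΦ hu₀ hu) fun σ hσ =>
    (div_le_iff₀' hc).2 (opANorm_le_of_mem (mem_luxemburgSet_of_le hΦ hu.1 ht htu hc hσ))

lemma opANorm_le_mul (hΦ : IsMusielakOrlicz Φ) (hu : OpMemL Φ a u) (ht : 0 ≤ t)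
    (hu₀ : 0 ≤ u) (htu : t ≤ c • u) (hc : 0 ≤ c) : OpANorm Φ a t ≤ c * OpANorm Φ a u := by
  have hlim : Tendsto (fun ε => (c + ε) * OpANorm Φ a u) (𝓝[>] 0) (𝓝 (c * OpANorm Φ a u)) := by
    simpa using ((tendsto_const_nhds.add tendsto_id).mul_const (OpANorm Φ a u)).mono_left
      (nhdsWithin_le_nhds (a := (0 : ℝ)))
  -- `mem_luxemburgSet_of_le` needs a positive factor, so approach `c` from above.
  refine ge_of_tendsto hlim ?_
  filter_upwards [self_mem_nhdsWithin] with ε (hε : 0 < ε)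
  exact opANorm_le_mul_of_pos hΦ hu ht hu₀
    (htu.trans (smul_le_smul_of_nonneg_right (le_add_of_nonneg_right hε.le) hu₀)) (by positivity)

lemma mem_luxemburgSet_of_opANorm_lt (hΦ : IsMusielakOrlicz Φ) (ht : 0 ≤ t) (h : OpMemL Φ a t)
    (hσ : OpANorm Φ a t < σ) : σ ∈ luxemburgSet Φ a t := by
  obtain ⟨τ, hτ, hτσ⟩ := exists_lt_of_csInf_lt (luxemburgSet_nonempty hΦ ht h) hσ
  have hτ₀ : 0 < τ := hτ.1
  have := mem_luxemburgSet_of_le hΦ h.1 ht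
    (le_smul_of_one_le_left ht ((one_le_div hτ₀).2 hτσ.le)) (div_pos (hτ₀.trans hτσ) hτ₀) hτ
  rwa [div_mul_cancel₀ _ hτ₀.ne'] at this

lemma opMemL_single_zero (hΦ : IsMusielakOrlicz Φ)
    (hcol : ∃ σ > (0 : ℝ), Summable fun n => Φ n (|a n 0| / σ)) (hc : 0 ≤ c) :
    OpMemL Φ a (Pi.single 0 c) := by
  obtain ⟨σ, hσ, hsum⟩ := hcol
  have hrow : ∀ n, HasSum (fun k => |a n k| * (Pi.single 0 1 : ℕ → ℝ) k) |a n 0| := fun n => by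
    simpa using hasSum_single (f := fun k => |a n k| * (Pi.single 0 1 : ℕ → ℝ) k) 0
      fun k hk => by simp [hk]
  have hone : OpMemL Φ a (Pi.single 0 1) :=
    ⟨fun n => (hrow n).summable, σ, hσ, by simpa [rowSum, (hrow _).tsum_eq] using hsum⟩
  refine opMemL_of_le (c := c) hΦ hone (Pi.single_nonneg.2 hc) (Pi.single_nonneg.2 zero_le_one) ?_
  rw [← Pi.single_smul, smul_eq_mul, mul_one]

lemma pair_le_of_le_add (hD : CondDiamond a M) (hu₀ : 0 ≤ u) (hv₀ : 0 ≤ v) (hv : Antitone v)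
    (htuv : ∀ j k, t (j + k) ≤ u j + v k) (n k : ℕ) :
    |a n (2 * k)| * t (2 * k) + |a n (2 * k + 1)| * t (2 * k + 1) ≤
      M * (|a n k| * u k + |a n k| * v k) := by
  have h₀ : t (2 * k) ≤ u k + v k := two_mul k ▸ htuv k k
  have h₁ : t (2 * k + 1) ≤ u k + v k := by
    have := htuv k (k + 1)
    rw [show k + (k + 1) = 2 * k + 1 by ring] at this
    exact this.trans (add_le_add le_rfl (hv k.le_succ))
  calc |a n (2 * k)| * t (2 * k) + |a n (2 * k + 1)| * t (2 * k + 1)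
      ≤ (|a n (2 * k)| + |a n (2 * k + 1)|) * (u k + v k) := by rw [add_mul]; gcongr
    _ ≤ M * |a n k| * (u k + v k) :=
        mul_le_mul_of_nonneg_right (hD n k) (add_nonneg (hu₀ k) (hv₀ k))
    _ = M * (|a n k| * u k + |a n k| * v k) := by ring

lemma rowSum_le_of_le_add (hD : CondDiamond a M) (ht : 0 ≤ t) (hu₀ : 0 ≤ u) (hv₀ : 0 ≤ v)
    (hv : Antitone v) (htuv : ∀ j k, t (j + k) ≤ u j + v k) (hus : RowsSummable a u)
    (hvs : RowsSummable a v) :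
    RowsSummable a t ∧ ∀ n, rowSum a t n ≤ M * (rowSum a u n + rowSum a v n) := by
  have hf : ∀ n, 0 ≤ fun k => |a n k| * t k := fun n k => mul_nonneg (abs_nonneg _) (ht k)
  have hg : ∀ n, Summable fun k => M * (|a n k| * u k + |a n k| * v k) := fun n =>
    ((hus n).add (hvs n)).mul_left M
  have hpair := pair_le_of_le_add hD hu₀ hv₀ hv htuv
  refine ⟨fun n => summable_of_even_add_odd_le (hf n) (hg n) (hpair n), fun n => ?_⟩
  calc rowSum a t n ≤ ∑' k, M * (|a n k| * u k + |a n k| * v k) :=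
        tsum_le_of_even_add_odd_le (hf n) (hg n) (hpair n)
    _ = M * (rowSum a u n + rowSum a v n) := by
        rw [tsum_mul_left, (hus n).tsum_add (hvs n), rowSum, rowSum]

lemma opMemL_of_le_add (hΦ : IsMusielakOrlicz Φ) (hM : 0 < M) (hD : CondDiamond a M)
    (ht : 0 ≤ t) (hu₀ : 0 ≤ u) (hv₀ : 0 ≤ v) (hv : Antitone v)
    (htuv : ∀ j k, t (j + k) ≤ u j + v k) (hu : OpMemL Φ a u) (hvL : OpMemL Φ a v) :
    OpMemL Φ a t := by
  obtain ⟨hus, σ, hσ, hsu⟩ := hu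
  obtain ⟨hvs, τ, hτ, hsv⟩ := hvL
  obtain ⟨hts, hrow⟩ := rowSum_le_of_le_add hD ht hu₀ hv₀ hv htuv hus hvs
  refine ⟨hts, M * (σ + τ), by positivity, ?_⟩
  refine ((hsu.mul_left (σ / (σ + τ))).add (hsv.mul_left (τ / (σ + τ)))).of_nonneg_of_le
    (map_rowSum_div_nonneg hΦ ht (by positivity)) fun n => ?_
  calc Φ n (rowSum a t n / (M * (σ + τ)))
      ≤ Φ n ((rowSum a u n + rowSum a v n) / (σ + τ)) := by
        refine (hΦ n).mono (div_nonneg (rowSum_nonneg ht n) (by positivity)) ?_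
        rw [← mul_div_mul_left _ (σ + τ) hM.ne']
        exact div_le_div_of_nonneg_right (hrow n) (by positivity)
    _ ≤ _ := (hΦ n).map_add_div_le (rowSum_nonneg hu₀ n) (rowSum_nonneg hv₀ n) hσ hτ

lemma abs_mul_le_mul_opANorm (hΦ : IsMusielakOrlicz Φ) (ht : 0 ≤ t) (h : OpMemL Φ a t)
    {n : ℕ} (hc : 0 < c) (hcΦ : ∀ x, 0 ≤ x → Φ n x ≤ 1 → x ≤ c) (k : ℕ) :
    |a n k| * t k ≤ c * OpANorm Φ a t := by
  rw [← div_le_iff₀' hc]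
  refine le_csInf (luxemburgSet_nonempty hΦ ht h) fun σ ⟨hσ, hsum, hle⟩ => ?_
  have hrow : Φ n (rowSum a t n / σ) ≤ 1 :=
    (hsum.le_tsum n fun m _ => map_rowSum_div_nonneg hΦ ht hσ.le m).trans hle
  have hbound := hcΦ _ (div_nonneg (rowSum_nonneg ht n) hσ.le) hrow
  rw [div_le_iff₀ hσ] at hbound
  rw [div_le_iff₀' hc]
  exact ((h.1 n).le_tsum k fun j _ => mul_nonneg (abs_nonneg _) (ht j)).trans hbound

lemma rowsSummable_and_mem_luxemburgSet_iff (hΦ : IsMusielakOrlicz Φ) (ht : 0 ≤ t)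
    (hσ : 0 < σ) :
    RowsSummable a t ∧ σ ∈ luxemburgSet Φ a t ↔
      ∀ G K : Finset ℕ, ∑ n ∈ G, Φ n ((∑ k ∈ K, |a n k| * t k) / σ) ≤ 1 := by
  have hterm : ∀ n k, 0 ≤ |a n k| * t k := fun n k => mul_nonneg (abs_nonneg _) (ht k)
  have hpart : ∀ n K, 0 ≤ (∑ k ∈ K, |a n k| * t k) / σ := fun n K =>
    div_nonneg (Finset.sum_nonneg fun k _ => hterm n k) hσ.le
  constructor
  · rintro ⟨hrows, -, hsum, hle⟩ G K
    calc ∑ n ∈ G, Φ n ((∑ k ∈ K, |a n k| * t k) / σ) ≤ ∑ n ∈ G, Φ n (rowSum a t n / σ) :=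
          Finset.sum_le_sum fun n _ => (hΦ n).mono (hpart n K) (div_le_div_of_nonneg_right
            ((hrows n).sum_le_tsum K fun k _ => hterm n k) hσ.le)
      _ ≤ ∑' n, Φ n (rowSum a t n / σ) :=
          hsum.sum_le_tsum G fun n _ => map_rowSum_div_nonneg hΦ ht hσ.le n
      _ ≤ 1 := hle
  · intro h
    have hrows : RowsSummable a t := fun n => by
      obtain ⟨c, -, hc⟩ := (hΦ n).exists_le_of_map_le_one
      refine summable_of_sum_le (c := c * σ) (hterm n) fun K => ?_
      have := hc _ (hpart n K) (by simpa using h {n} K)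
      rwa [div_le_iff₀ hσ] at this
    have hG : ∀ G : Finset ℕ, ∑ n ∈ G, Φ n (rowSum a t n / σ) ≤ 1 := fun G =>
      le_of_tendsto' (tendsto_finsetSum G fun n _ => (hΦ n).tendsto_comp (hpart n)
        (div_nonneg (rowSum_nonneg ht n) hσ.le) (Tendsto.div_const (hrows n).hasSum σ))
        fun K => h G K
    have hsum : Summable fun n => Φ n (rowSum a t n / σ) :=
      summable_of_sum_le (map_rowSum_div_nonneg hΦ ht hσ.le) hG
    exact ⟨hrows, hσ, hsum, hsum.tsum_le_of_sum_le hG⟩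

lemma rowsSummable_and_mem_luxemburgSet_of_tendsto (hΦ : IsMusielakOrlicz Φ) {ι : Type*}
    {l : Filter ι} [l.NeBot] {t' : ι → ℕ → ℝ} (ht' : ∀ i, 0 ≤ t' i)
    (hlim : ∀ k, Tendsto (fun i => t' i k) l (𝓝 (t k))) (hσ : 0 < σ)
    (hmem : ∀ᶠ i in l, RowsSummable a (t' i) ∧ σ ∈ luxemburgSet Φ a (t' i)) :
    RowsSummable a t ∧ σ ∈ luxemburgSet Φ a t := by
  have ht : 0 ≤ t := fun k => ge_of_tendsto' (hlim k) fun i => ht' i k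
  have hpart : ∀ w : ℕ → ℝ, 0 ≤ w → ∀ n K, 0 ≤ (∑ k ∈ K, |a n k| * w k) / σ :=
    fun w hw n K => div_nonneg (Finset.sum_nonneg fun k _ => mul_nonneg (abs_nonneg _) (hw k)) hσ.le
  refine (rowsSummable_and_mem_luxemburgSet_iff hΦ ht hσ).2 fun G K => ?_
  refine le_of_tendsto (tendsto_finsetSum G fun n _ => (hΦ n).tendsto_comp
    (fun i => hpart _ (ht' i) n K) (hpart t ht n K)
    ((tendsto_finsetSum K fun k _ => (hlim k).const_mul |a n k|).div_const σ)) ?_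
  filter_upwards [hmem] with i hi
  exact (rowsSummable_and_mem_luxemburgSet_iff hΦ (ht' i) hσ).1 hi G K

end SequenceSpace

namespace SNumberSeq

variable (s : SNumberSeq) {E F : Type}
  [NormedAddCommGroup E] [NormedSpace ℝ E] [CompleteSpace E]
  [NormedAddCommGroup F] [NormedSpace ℝ F] [CompleteSpace F]

lemma s_nonneg (T : E →L[ℝ] F) : 0 ≤ s.s E F T := s.nonneg E F T

lemma s_comp_le {E₀ F₀ : Type}
    [NormedAddCommGroup E₀] [NormedSpace ℝ E₀] [CompleteSpace E₀]
    [NormedAddCommGroup F₀] [NormedSpace ℝ F₀] [CompleteSpace F₀]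
    (R : F →L[ℝ] F₀) (S : E →L[ℝ] F) (T : E₀ →L[ℝ] E) :
    s.s E₀ F₀ ((R.comp S).comp T) ≤ (‖R‖ * ‖T‖) • s.s E F S := fun k =>
  (s.ideal E F E₀ F₀ R S T k).trans_eq (by rw [Pi.smul_apply, smul_eq_mul]; ring)

lemma s_neg_le (T : E →L[ℝ] F) : s.s E F (-T) ≤ s.s E F T := by
  have hneg : ((-ContinuousLinearMap.id ℝ F).comp T).comp (ContinuousLinearMap.id ℝ E) = -T := by
    ext; simp
  have hid : ‖-ContinuousLinearMap.id ℝ F‖ * ‖ContinuousLinearMap.id ℝ E‖ ≤ 1 := by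
    rw [norm_neg]
    exact mul_le_one₀ ContinuousLinearMap.norm_id_le (norm_nonneg _)
      ContinuousLinearMap.norm_id_le
  simpa [hneg] using (s.s_comp_le _ T _).trans (smul_le_smul_of_nonneg_right hid (s.s_nonneg T))

lemma s_le_add_norm_sub (X Y : E →L[ℝ] F) (k : ℕ) : s.s E F X k ≤ s.s E F Y k + ‖X - Y‖ := by
  have h := s.additive E F (X - Y) Y 0 k
  rwa [sub_add_cancel, zero_add, s.norm_eq, add_comm] at h

lemma abs_s_sub_le (X Y : E →L[ℝ] F) (k : ℕ) : |s.s E F X k - s.s E F Y k| ≤ ‖X - Y‖ :=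
  abs_sub_le_iff.2 ⟨by linarith [s.s_le_add_norm_sub X Y k],
    by linarith [s.s_le_add_norm_sub Y X k, norm_sub_rev X Y]⟩

lemma s_smulRight (x' : E →L[ℝ] ℝ) (y : F) :
    s.s E F (x'.smulRight y) = Pi.single 0 ‖x'.smulRight y‖ := by
  funext k
  rcases k with _ | k
  · simp [s.norm_eq]
  · rw [Pi.single_eq_of_ne k.succ_ne_zero]
    refine s.rank E F _ _ ?_
    have hrange : LinearMap.range ((x'.smulRight y : E →L[ℝ] F) : E →ₗ[ℝ] F) ≤
        Submodule.span ℝ {y} := by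
      rintro _ ⟨x, rfl⟩
      exact Submodule.smul_mem _ _ (Submodule.mem_span_singleton_self y)
    calc Module.rank ℝ (LinearMap.range ((x'.smulRight y : E →L[ℝ] F) : E →ₗ[ℝ] F))
        ≤ Module.rank ℝ (Submodule.span ℝ ({y} : Set F)) := Submodule.rank_mono hrange
      _ ≤ 1 := (rank_span_le _).trans (Cardinal.mk_singleton y).le
      _ ≤ ((k + 1 : ℕ) : Cardinal) := by exact_mod_cast k.succ_pos

end SNumberSeq

section OperatorIdeal

variable {Φ : ℕ → ℝ → ℝ} {a : ℕ → ℕ → ℝ} {M : ℝ} (s : SNumberSeq) {E F : Type}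
  [NormedAddCommGroup E] [NormedSpace ℝ E] [CompleteSpace E]
  [NormedAddCommGroup F] [NormedSpace ℝ F] [CompleteSpace F]

lemma opMemL_add (hΦ : IsMusielakOrlicz Φ) (hM : 0 < M) (hD : CondDiamond a M)
    {S T : E →L[ℝ] F} (hS : OpMemL Φ a (s.s E F S)) (hT : OpMemL Φ a (s.s E F T)) :
    OpMemL Φ a (s.s E F (S + T)) :=
  opMemL_of_le_add hΦ hM hD (s.s_nonneg _) (s.s_nonneg _) (s.s_nonneg _) (s.antitone E F T)
    (s.additive E F S T) hS hT

lemma opMemL_sub (hΦ : IsMusielakOrlicz Φ) (hM : 0 < M) (hD : CondDiamond a M)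
    {S T : E →L[ℝ] F} (hS : OpMemL Φ a (s.s E F S)) (hT : OpMemL Φ a (s.s E F T)) :
    OpMemL Φ a (s.s E F (S - T)) :=
  sub_eq_add_neg S T ▸ opMemL_add s hΦ hM hD hS
    (opMemL_of_le hΦ hT (s.s_nonneg _) (s.s_nonneg _) ((s.s_neg_le T).trans_eq (one_smul ℝ _).symm))

section Composition

variable {E₀ F₀ : Type}
  [NormedAddCommGroup E₀] [NormedSpace ℝ E₀] [CompleteSpace E₀]
  [NormedAddCommGroup F₀] [NormedSpace ℝ F₀] [CompleteSpace F₀]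
  (R : F →L[ℝ] F₀) {S : E →L[ℝ] F} (T : E₀ →L[ℝ] E)

lemma opMemL_comp (hΦ : IsMusielakOrlicz Φ) (hS : OpMemL Φ a (s.s E F S)) :
    OpMemL Φ a (s.s E₀ F₀ ((R.comp S).comp T)) :=
  opMemL_of_le hΦ hS (s.s_nonneg _) (s.s_nonneg _) (s.s_comp_le R S T)

lemma opANorm_comp_le (hΦ : IsMusielakOrlicz Φ) (hS : OpMemL Φ a (s.s E F S)) :
    OpANorm Φ a (s.s E₀ F₀ ((R.comp S).comp T)) ≤ ‖R‖ * OpANorm Φ a (s.s E F S) * ‖T‖ := by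
  rw [mul_right_comm]
  exact opANorm_le_mul hΦ hS (s.s_nonneg _) (s.s_nonneg _) (s.s_comp_le R S T) (by positivity)

end Composition

lemma exists_norm_le_mul_opANorm (hΦ : IsMusielakOrlicz Φ) (hA : MatrixClassA a) :
    ∃ C > 0, ∀ X : E →L[ℝ] F, OpMemL Φ a (s.s E F X) → ‖X‖ ≤ C * OpANorm Φ a (s.s E F X) := by
  obtain ⟨n, hn⟩ := hA 0
  obtain ⟨c, hc, hcΦ⟩ := (hΦ n).exists_le_of_map_le_one
  refine ⟨c / |a n 0|, div_pos hc (abs_pos.2 hn), fun X hX => ?_⟩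
  have := abs_mul_le_mul_opANorm hΦ (s.s_nonneg X) hX hc hcΦ 0
  rw [s.norm_eq] at this
  rwa [div_mul_eq_mul_div, le_div_iff₀' (abs_pos.2 hn)]

variable {f : ℕ → E →L[ℝ] F}

lemma cauchySeq_of_opANorm (hΦ : IsMusielakOrlicz Φ) (hA : MatrixClassA a)
    (hdiff : ∀ m l, OpMemL Φ a (s.s E F (f m - f l)))
    (hcau : ∀ ε > (0 : ℝ), ∃ N : ℕ, ∀ m ≥ N, ∀ l ≥ N, OpANorm Φ a (s.s E F (f m - f l)) < ε) :
    CauchySeq f := by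
  obtain ⟨C, hC, hnorm⟩ := exists_norm_le_mul_opANorm s hΦ hA (E := E) (F := F)
  refine Metric.cauchySeq_iff'.2 fun ε hε => ?_
  obtain ⟨N, hN⟩ := hcau (ε / C) (by positivity)
  refine ⟨N, fun m hm => ?_⟩
  rw [dist_eq_norm]
  calc ‖f m - f N‖ ≤ C * OpANorm Φ a (s.s E F (f m - f N)) := hnorm _ (hdiff m N)
    _ < C * (ε / C) := by gcongr; exact hN m hm N le_rfl
    _ = ε := mul_div_cancel₀ ε hC.ne'

lemma eventually_opANorm_sub_le (hΦ : IsMusielakOrlicz Φ) {T : E →L[ℝ] F}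
    (hT : Tendsto f atTop (𝓝 T)) (hdiff : ∀ m l, OpMemL Φ a (s.s E F (f m - f l)))
    (hcau : ∀ ε > (0 : ℝ), ∃ N : ℕ, ∀ m ≥ N, ∀ l ≥ N, OpANorm Φ a (s.s E F (f m - f l)) < ε)
    {ε : ℝ} (hε : 0 < ε) :
    ∃ N, ∀ m ≥ N, OpMemL Φ a (s.s E F (f m - T)) ∧ OpANorm Φ a (s.s E F (f m - T)) ≤ ε := by
  obtain ⟨N, hN⟩ := hcau ε hε
  refine ⟨N, fun m hm => ?_⟩
  have hnorm : Tendsto (fun l => ‖(f m - f l) - (f m - T)‖) atTop (𝓝 0) := by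
    simpa only [sub_sub_sub_cancel_left, norm_sub_rev T] using
      tendsto_iff_norm_sub_tendsto_zero.1 hT
  have hlim : ∀ k, Tendsto (fun l => s.s E F (f m - f l) k) atTop (𝓝 (s.s E F (f m - T) k)) :=
    fun k => tendsto_iff_dist_tendsto_zero.2 (squeeze_zero (fun _ => dist_nonneg)
      (fun l => (Real.dist_eq _ _).trans_le (s.abs_s_sub_le _ _ k)) hnorm)
  obtain ⟨hrows, hmem⟩ := rowsSummable_and_mem_luxemburgSet_of_tendsto hΦ
    (fun l => s.s_nonneg _) hlim hε (eventually_atTop.2 ⟨N, fun l hl => ⟨(hdiff m l).1,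
      mem_luxemburgSet_of_opANorm_lt hΦ (s.s_nonneg _) (hdiff m l) (hN m hm l hl)⟩⟩)
  exact ⟨⟨hrows, ε, hε, hmem.2.1⟩, opANorm_le_of_mem hmem⟩

lemma exists_opMemL_tendsto_opANorm (hΦ : IsMusielakOrlicz Φ) (hA : MatrixClassA a)
    (hM : 0 < M) (hD : CondDiamond a M) (hf : ∀ m, OpMemL Φ a (s.s E F (f m)))
    (hcau : ∀ ε > (0 : ℝ), ∃ N : ℕ, ∀ m ≥ N, ∀ l ≥ N, OpANorm Φ a (s.s E F (f m - f l)) < ε) :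
    ∃ T : E →L[ℝ] F, OpMemL Φ a (s.s E F T) ∧
      Tendsto (fun m => OpANorm Φ a (s.s E F (f m - T))) atTop (𝓝 0) := by
  have hdiff : ∀ m l, OpMemL Φ a (s.s E F (f m - f l)) := fun m l =>
    opMemL_sub s hΦ hM hD (hf m) (hf l)
  obtain ⟨T, hT⟩ := cauchySeq_tendsto_of_complete (cauchySeq_of_opANorm s hΦ hA hdiff hcau)
  have hlim := fun ε (hε : 0 < ε) => eventually_opANorm_sub_le s hΦ hT hdiff hcau hε
  obtain ⟨N, hN⟩ := hlim 1 one_pos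
  refine ⟨T, by simpa using opMemL_sub s hΦ hM hD (hf N) (hN N le_rfl).1, ?_⟩
  refine Metric.tendsto_atTop.2 fun ε hε => ?_
  obtain ⟨N, hN⟩ := hlim (ε / 2) (half_pos hε)
  refine ⟨N, fun m hm => ?_⟩
  rw [Real.dist_eq, sub_zero, abs_of_nonneg opANorm_nonneg]
  linarith [(hN m hm).2]

end OperatorIdeal

/-- for `A ∈ 𝒜` satisfying condition (♦) whose first column lies
in `l_Φ`, the class `L_Φ^A` is a quasi-Banach operator ideal. -/
theorem opLPhiA_operator_ideal
    (Φ : ℕ → ℝ → ℝ) (hΦ : IsMusielakOrlicz Φ)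
    (a : ℕ → ℕ → ℝ) (hA : MatrixClassA a)
    (M : ℝ) (hM : 0 < M) (hD : CondDiamond a M)
    (hcol : ∃ σ > (0 : ℝ), Summable fun n => Φ n (|a n 0| / σ))
    (s : SNumberSeq) :
    (∀ (E F : Type) [NormedAddCommGroup E] [NormedSpace ℝ E] [CompleteSpace E]
      [NormedAddCommGroup F] [NormedSpace ℝ F] [CompleteSpace F]
      (x' : E →L[ℝ] ℝ) (y : F),
      OpMemL Φ a (s.s E F (x'.smulRight y))) ∧
    (∀ (E F : Type) [NormedAddCommGroup E] [NormedSpace ℝ E] [CompleteSpace E]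
      [NormedAddCommGroup F] [NormedSpace ℝ F] [CompleteSpace F]
      (S T : E →L[ℝ] F), OpMemL Φ a (s.s E F S) → OpMemL Φ a (s.s E F T) →
      OpMemL Φ a (s.s E F (S + T))) ∧
    (∀ (E F E₀ F₀ : Type)
      [NormedAddCommGroup E] [NormedSpace ℝ E] [CompleteSpace E]
      [NormedAddCommGroup F] [NormedSpace ℝ F] [CompleteSpace F]
      [NormedAddCommGroup E₀] [NormedSpace ℝ E₀] [CompleteSpace E₀]
      [NormedAddCommGroup F₀] [NormedSpace ℝ F₀] [CompleteSpace F₀]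
      (T : E₀ →L[ℝ] E) (S : E →L[ℝ] F) (R : F →L[ℝ] F₀),
      OpMemL Φ a (s.s E F S) →
      OpMemL Φ a (s.s E₀ F₀ ((R.comp S).comp T)) ∧
        OpANorm Φ a (s.s E₀ F₀ ((R.comp S).comp T)) ≤
          ‖R‖ * OpANorm Φ a (s.s E F S) * ‖T‖) ∧
    (∀ (E F : Type) [NormedAddCommGroup E] [NormedSpace ℝ E] [CompleteSpace E]
      [NormedAddCommGroup F] [NormedSpace ℝ F] [CompleteSpace F]
      (f : ℕ → (E →L[ℝ] F)), (∀ m, OpMemL Φ a (s.s E F (f m))) →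
      (∀ ε > (0 : ℝ), ∃ N : ℕ, ∀ m ≥ N, ∀ l ≥ N,
        OpANorm Φ a (s.s E F (f m - f l)) < ε) →
      ∃ T : E →L[ℝ] F, OpMemL Φ a (s.s E F T) ∧
        Tendsto (fun m => OpANorm Φ a (s.s E F (f m - T))) atTop (𝓝 0)) := by
  refine ⟨fun E F _ _ _ _ _ _ x' y => ?_,
    fun E F _ _ _ _ _ _ S T hS hT => opMemL_add s hΦ hM hD hS hT,
    fun E F E₀ F₀ _ _ _ _ _ _ _ _ _ _ _ _ T S R hS =>
      ⟨opMemL_comp s R T hΦ hS, opANorm_comp_le s R T hΦ hS⟩,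
    fun E F _ _ _ _ _ _ f hf hcau => exists_opMemL_tendsto_opANorm s hΦ hA hM hD hf hcau⟩
  rw [s.s_smulRight]
  exact opMemL_single_zero hΦ hcol (norm_nonneg _)
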